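/- arXiv:2401.11580 — 2 statements merged into one kernel-verified Lean document; each statement's English description precedes it below -/
import Mathlib

section
/- Let f : ℕ → ℕ be nondecreasing with 1 ≤ f(n) for all n and f(n)/n → 0 as n → ∞. There exists a constant c > 0 (depending on λ_e and λ) such that for all sufficiently large n, in the complete bipartite graph K_{L,R} with |L| = f(n) and |R| = n − f(n), every vertex j ∈ R satisfies v_{K_{L,R}}(j) ≥ c·n/f(n). -/
open Finset
open scoped Classical

/-- Transmission rate from node `i` into the set `S`: `λ·|N(i) ∩ S|/deg(i)`,
interpreted as `0` when `deg(i) = 0`. -/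
noncomputable def rate {n : ℕ} (lam : ℝ) (G : SimpleGraph (Fin n))
    (S : Finset (Fin n)) (i : Fin n) : ℝ :=
  if G.degree i = 0 then 0
  else lam * ((G.neighborFinset i ∩ S).card : ℝ) / (G.degree i : ℝ)

/-- The version age `v_G(S)`, defined by downward recursion on `n - |S|`. -/
noncomputable def vAge (lam_e lam : ℝ) {n : ℕ} (G : SimpleGraph (Fin n))
    (S : Finset (Fin n)) : ℝ :=
  (lam_e + ∑ i ∈ Sᶜ.attach, rate lam G S i.1 * vAge lam_e lam G (insert i.1 S)) /
    (lam * (S.card : ℝ) / (n : ℝ) + ∑ i ∈ Sᶜ, rate lam G S i)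
termination_by Sᶜ.card
decreasing_by
  have hi := i.2
  rw [Finset.compl_insert]
  exact Finset.card_erase_lt_of_mem hi

/-- The complete bipartite graph on `Fin n` whose left part consists of the
first `L` vertices. -/
def biGraph (n L : ℕ) : SimpleGraph (Fin n) where
  Adj i j := (i.val < L) ≠ (j.val < L)
  symm := ⟨fun _ _ h => Ne.symm h⟩
  loopless := ⟨fun _ h => h rfl⟩

/-- Canonical subset of `K_{L,R}` with `i` left vertices and `j` right vertices. -/
def canonSet (n L i j : ℕ) : Finset (Fin n) :=
  ({v | v.val < i} : Finset (Fin n)) ∪ ({v | L ≤ v.val ∧ v.val < L + j} : Finset (Fin n))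

/-- `u(i,j) = (λ/λ_e)·v(i,j)` for the complete bipartite graph `K_{L, n-L}`. -/
noncomputable def uIJ (lam_e lam : ℝ) (n L i j : ℕ) : ℝ :=
  (lam / lam_e) * vAge lam_e lam (biGraph n L) (canonSet n L i j)

/-- The number of edges of `G` with exactly one endpoint in `S`. -/
noncomputable def edgeBoundary {n : ℕ} (G : SimpleGraph (Fin n)) (S : Finset (Fin n)) : ℕ :=
  ∑ i ∈ S, ((G.neighborFinset i).filter fun j => j ∉ S).card

/-- The probability, under the Erdős–Rényi measure `G(n,p)`, of a set `A` of graphs. -/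
noncomputable def erProb (n : ℕ) (p : ℝ) (A : Finset (SimpleGraph (Fin n))) : ℝ :=
  ∑ G ∈ A, p ^ G.edgeFinset.card * (1 - p) ^ (n.choose 2 - G.edgeFinset.card)

lemma rate_nonneg {n : ℕ} {lam : ℝ} (h : 0 ≤ lam) (G : SimpleGraph (Fin n))
    (S : Finset (Fin n)) (i : Fin n) : 0 ≤ rate lam G S i := by
  unfold rate
  split
  · exact le_refl _
  · positivity

lemma vAge_nonneg (lam_e lam : ℝ) (h_e : 0 ≤ lam_e) (h : 0 ≤ lam) {n : ℕ}
    (G : SimpleGraph (Fin n)) (S : Finset (Fin n)) : 0 ≤ vAge lam_e lam G S := by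
  rw [vAge]
  apply div_nonneg
  · apply add_nonneg h_e
    apply Finset.sum_nonneg
    intro i _
    exact mul_nonneg (rate_nonneg h G S i.1) (vAge_nonneg lam_e lam h_e h G (insert i.1 S))
  · apply add_nonneg
    · positivity
    · exact Finset.sum_nonneg fun i _ => rate_nonneg h G S i
termination_by Sᶜ.card
decreasing_by
  have hi := i.2
  rw [Finset.compl_insert]
  exact Finset.card_erase_lt_of_mem hi

lemma card_lt_filter (n L : ℕ) (h : L ≤ n) :
    (Finset.univ.filter fun i : Fin n => i.val < L).card = L := by
  rw [← Finset.card_range L]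
  apply Finset.card_bij (fun a _ => a.val)
  · intro a ha; simp at ha ⊢; exact ha
  · intro a _ b _ hab; exact Fin.val_injective hab
  · intro b hb
    simp at hb
    exact ⟨⟨b, lt_of_lt_of_le hb h⟩, by simp [hb], rfl⟩

lemma biGraph_degree_left {n L : ℕ} (h : L ≤ n) (i : Fin n) (hi : i.val < L) :
    (biGraph n L).degree i = n - L := by
  have h2 : (biGraph n L).neighborFinset i
      = Finset.univ.filter (fun k : Fin n => ¬ k.val < L) := by
    ext k
    simp only [SimpleGraph.mem_neighborFinset, Finset.mem_filter, Finset.mem_univ, true_and]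
    show ((i.val < L) ≠ (k.val < L)) ↔ _
    simp [hi]
  rw [SimpleGraph.degree, h2, Finset.filter_not, Finset.card_sdiff_of_subset (Finset.filter_subset _ _),
    card_lt_filter n L h, Finset.card_univ, Fintype.card_fin]

lemma biGraph_not_adj_right {n L : ℕ} (i j : Fin n) (hi : L ≤ i.val) (hj : L ≤ j.val) :
    ¬ (biGraph n L).Adj i j := by
  simp only [biGraph, ne_eq, not_not, eq_iff_iff]
  constructor <;> intro h <;> omega

/-- If `|L| = f(n)` with `f` nondecreasing, `f ≥ 1`, `f(n)/n → 0`,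
then every right vertex of `K_{f(n), n-f(n)}` has version age `Ω(n/f(n))`. -/
theorem stmt_1 (lam_e lam : ℝ) (hlam_e : 0 < lam_e) (hlam : 0 < lam)
    (f : ℕ → ℕ) (hmono : Monotone f) (hf1 : ∀ n, 1 ≤ f n)
    (hfo : Filter.Tendsto (fun n : ℕ => (f n : ℝ) / (n : ℝ)) Filter.atTop (nhds 0)) :
    ∃ c : ℝ, 0 < c ∧ ∃ N : ℕ, ∀ n : ℕ, N ≤ n → ∀ j : Fin n, f n ≤ j.val →
      c * (n : ℝ) / (f n : ℝ) ≤ vAge lam_e lam (biGraph n (f n)) {j} := by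
  refine ⟨lam_e / (3 * lam), by positivity, ?_⟩
  have hev : ∀ᶠ n : ℕ in Filter.atTop, (f n : ℝ) / n < 1/2 :=
    hfo.eventually (gt_mem_nhds (by norm_num))
  obtain ⟨N, hN⟩ := Filter.eventually_atTop.mp hev
  refine ⟨max N 1, ?_⟩
  intro n hn j hj
  set L := f n with hL
  have hn1 : 1 ≤ n := le_trans (le_max_right N 1) hn
  have hnpos : (0:ℝ) < n := by exact_mod_cast hn1
  have hL1 : 1 ≤ L := hf1 n
  have hLpos : (0:ℝ) < L := by exact_mod_cast hL1
  have h2L : 2 * L ≤ n := by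
    have := hN n (le_trans (le_max_left N 1) hn)
    rw [div_lt_iff₀ hnpos] at this
    have : (2 * L : ℝ) < n := by push_cast; linarith
    exact_mod_cast this.le
  have hLn : L < n := by omega
  have hLle : L ≤ n := hLn.le
  set G := biGraph n L with hG
  -- rates: right vertices contribute 0, left vertices ≤ 2λ/n
  have hrate : ∀ i : Fin n, i ≠ j →
      rate lam G {j} i ≤ if i.val < L then 2 * lam / n else 0 := by
    intro i hij
    by_cases hi : i.val < L
    · simp only [hi, if_true]
      unfold rate
      have hdeg : G.degree i = n - L := biGraph_degree_left hLle i hi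
      have hdne : G.degree i ≠ 0 := by rw [hdeg]; omega
      rw [if_neg hdne, hdeg]
      have hcard : ((G.neighborFinset i ∩ {j}).card : ℝ) ≤ 1 := by
        have := Finset.card_le_card (Finset.inter_subset_right (s₁ := G.neighborFinset i)
          (s₂ := {j}))
        simp at this
        exact_mod_cast this
      have hnL : (0:ℝ) < ((n - L : ℕ) : ℝ) := by
        have : 0 < n - L := by omega
        exact_mod_cast this
      rw [div_le_div_iff₀ hnL hnpos]
      have hcast : ((n - L : ℕ) : ℝ) = (n : ℝ) - L := by
        push_cast [hLle]; ring
      have h2 : (n : ℝ) ≤ 2 * ((n : ℝ) - L) := by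
        have : (2 * L : ℝ) ≤ n := by exact_mod_cast h2L
        linarith
      calc lam * ((G.neighborFinset i ∩ {j}).card : ℝ) * n
          ≤ lam * 1 * n := by
            apply mul_le_mul_of_nonneg_right _ hnpos.le
            exact mul_le_mul_of_nonneg_left hcard hlam.le
        _ ≤ 2 * lam * ((n:ℝ) - L) := by nlinarith
        _ = 2 * lam * ((n - L : ℕ) : ℝ) := by rw [hcast]
    · simp only [hi, if_false]
      unfold rate
      split
      · exact le_refl _
      · have : G.neighborFinset i ∩ {j} = ∅ := by
          ext k
          simp only [Finset.mem_inter, SimpleGraph.mem_neighborFinset, Finset.mem_singleton,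
            Finset.notMem_empty, iff_false]
          rintro ⟨hadj, rfl⟩
          exact biGraph_not_adj_right i k (by omega) hj hadj
        rw [this]
        simp
  -- sum of rates bound
  have hsum : ∑ i ∈ ({j} : Finset (Fin n))ᶜ, rate lam G {j} i ≤ 2 * lam * L / n := by
    calc ∑ i ∈ ({j} : Finset (Fin n))ᶜ, rate lam G {j} i
        ≤ ∑ i ∈ ({j} : Finset (Fin n))ᶜ, (if i.val < L then 2 * lam / n else 0) := by
          apply Finset.sum_le_sum
          intro i hi
          apply hrate
          simpa using hi
      _ ≤ ∑ i : Fin n, (if i.val < L then 2 * lam / n else 0) := by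
          apply Finset.sum_le_sum_of_subset_of_nonneg (Finset.subset_univ _)
          intro i _ _
          split <;> positivity
      _ = (Finset.univ.filter fun i : Fin n => i.val < L).card * (2 * lam / n) := by
          rw [Finset.sum_ite, Finset.sum_const_zero, add_zero, Finset.sum_const,
            nsmul_eq_mul]
      _ = 2 * lam * L / n := by
          rw [card_lt_filter n L hLle]; ring
  -- denominator bound
  set D := lam * ((({j} : Finset (Fin n))).card : ℝ) / n + ∑ i ∈ ({j} : Finset (Fin n))ᶜ, rate lam G {j} i with hD
  have hDpos : 0 < D := by
    rw [hD]
    apply add_pos_of_pos_of_nonneg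
    · simp; positivity
    · exact Finset.sum_nonneg fun i _ => rate_nonneg hlam.le G {j} i
  have hDle : D ≤ 3 * lam * L / n := by
    rw [hD]
    simp only [Finset.card_singleton, Nat.cast_one, mul_one]
    have h1L : (1:ℝ) ≤ L := by exact_mod_cast hL1
    have : lam / n + 2 * lam * (L:ℝ) / n ≤ 3 * lam * (L:ℝ) / n := by
      rw [← add_div]
      apply div_le_div_of_nonneg_right _ hnpos.le
      nlinarith
    linarith [hsum]
  -- numerator bound and conclusion
  rw [vAge]
  have hnum : lam_e ≤ lam_e + ∑ i ∈ (({j} : Finset (Fin n))ᶜ).attach,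
      rate lam G {j} i.1 * vAge lam_e lam G (insert i.1 {j}) := by
    have : 0 ≤ ∑ i ∈ (({j} : Finset (Fin n))ᶜ).attach,
        rate lam G {j} i.1 * vAge lam_e lam G (insert i.1 {j}) :=
      Finset.sum_nonneg fun i _ => mul_nonneg (rate_nonneg hlam.le G {j} i.1)
        (vAge_nonneg lam_e lam hlam_e.le hlam.le G _)
    linarith
  calc lam_e / (3 * lam) * n / L = lam_e / (3 * lam * L / n) := by
        rw [div_div_eq_mul_div, div_mul_eq_mul_div, div_div]
    _ ≤ lam_e / D := by
        apply div_le_div_of_nonneg_left hlam_e.le hDpos hDle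
    _ ≤ _ := by
        rw [← hD]
        exact div_le_div_of_nonneg_right hnum hDpos.le
end

section
/- In the complete bipartite graph K_{L,R}, if S and S' are nonempty subsets of the vertex set with |S ∩ L| = |S' ∩ L| and |S ∩ R| = |S' ∩ R|, then v_{K_{L,R}}(S) = v_{K_{L,R}}(S'). -/
open Finset
open scoped Classical

lemma card_left (n L : ℕ) (hL : L ≤ n) :
    (univ.filter fun v : Fin n => v.val < L).card = L := by
  rw [← Finset.card_range L]
  apply Finset.card_bij (fun v _ => v.val)
  · intro a ha; simp only [mem_filter] at ha; simpa using ha.2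
  · intro a ha b hb h; exact Fin.ext h
  · intro b hb; simp only [Finset.mem_range] at hb
    exact ⟨⟨b, lt_of_lt_of_le hb hL⟩, by simp [hb], rfl⟩

lemma card_right (n L : ℕ) (hL : L ≤ n) :
    (univ.filter fun v : Fin n => ¬ v.val < L).card = n - L := by
  have h := Finset.card_filter_add_card_filter_not (s := (univ : Finset (Fin n)))
    (p := fun v : Fin n => v.val < L)
  rw [card_left n L hL, Finset.card_univ, Fintype.card_fin] at h
  omega

lemma nb_left (n L : ℕ) (i : Fin n) (hi : i.val < L) :
    (biGraph n L).neighborFinset i = univ.filter fun v : Fin n => ¬ v.val < L := by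
  ext v
  rw [SimpleGraph.mem_neighborFinset]
  simp [SimpleGraph.mem_neighborFinset, biGraph, ne_eq, eq_iff_iff, hi]

lemma nb_right (n L : ℕ) (i : Fin n) (hi : ¬ i.val < L) :
    (biGraph n L).neighborFinset i = univ.filter fun v : Fin n => v.val < L := by
  ext v
  rw [SimpleGraph.mem_neighborFinset]
  simp [SimpleGraph.mem_neighborFinset, biGraph, ne_eq, eq_iff_iff, hi]

lemma inter_filter_card (n : ℕ) (p : Fin n → Prop) [DecidablePred p] (S : Finset (Fin n)) :
    ((univ.filter p) ∩ S).card = (S.filter p).card := by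
  congr 1
  ext v
  simp [Finset.mem_filter, and_comm]

lemma rate_left (lam : ℝ) (n L : ℕ) (hL : L ≤ n) (S : Finset (Fin n)) (i : Fin n)
    (hi : i.val < L) :
    rate lam (biGraph n L) S i =
      if n - L = 0 then 0
      else lam * ((S.filter fun v => ¬ v.val < L).card : ℝ) / ((n - L : ℕ) : ℝ) := by
  have hd : (biGraph n L).degree i = n - L := by
    rw [SimpleGraph.degree, nb_left n L i hi, card_right n L hL]
  rw [rate, hd, nb_left n L i hi, inter_filter_card]

lemma rate_right (lam : ℝ) (n L : ℕ) (hL : L ≤ n) (S : Finset (Fin n)) (i : Fin n)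
    (hi : ¬ i.val < L) :
    rate lam (biGraph n L) S i =
      if L = 0 then 0
      else lam * ((S.filter fun v => v.val < L).card : ℝ) / (L : ℝ) := by
  have hd : (biGraph n L).degree i = L := by
    rw [SimpleGraph.degree, nb_right n L i hi, card_left n L hL]
  rw [rate, hd, nb_right n L i hi, inter_filter_card]

lemma compl_filter_card (n : ℕ) (p : Fin n → Prop) [DecidablePred p] (S : Finset (Fin n)) :
    (Sᶜ.filter p).card = (univ.filter p).card - (S.filter p).card := by
  have : Sᶜ.filter p = (univ.filter p) \ (S.filter p) := by
    ext v; simp [Finset.mem_filter, Finset.mem_compl, Finset.mem_sdiff]; tauto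
  rw [this, Finset.card_sdiff_of_subset (Finset.filter_subset_filter p (Finset.subset_univ S))]

lemma filter_insert_card_pos {n : ℕ} (p : Fin n → Prop) [DecidablePred p]
    (S : Finset (Fin n)) (i : Fin n) (hiS : i ∉ S) (hpi : p i) :
    ((insert i S).filter p).card = (S.filter p).card + 1 := by
  rw [Finset.filter_insert, if_pos hpi,
    Finset.card_insert_of_notMem (fun h => hiS (Finset.mem_filter.mp h).1)]

lemma filter_insert_card_neg {n : ℕ} (p : Fin n → Prop) [DecidablePred p]
    (S : Finset (Fin n)) (i : Fin n) (hpi : ¬ p i) :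
    ((insert i S).filter p).card = (S.filter p).card := by
  rw [Finset.filter_insert, if_neg hpi]

lemma insert_compl_card {n : ℕ} (S : Finset (Fin n)) (i : Fin n) (hi : i ∈ Sᶜ) :
    (insert i S)ᶜ.card = Sᶜ.card - 1 := by
  rw [Finset.compl_insert, Finset.card_erase_of_mem hi]

lemma key (lam_e lam : ℝ) (n L : ℕ) (hL : L ≤ n) :
    ∀ k (S S' : Finset (Fin n)), Sᶜ.card = k →
    (S.filter fun v => v.val < L).card = (S'.filter fun v => v.val < L).card →
    (S.filter fun v => ¬ v.val < L).card = (S'.filter fun v => ¬ v.val < L).card →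
    vAge lam_e lam (biGraph n L) S = vAge lam_e lam (biGraph n L) S' := by
  intro k
  induction k using Nat.strong_induction_on with
  | _ k IH =>
  intro S S' hk ha hb
  have hcardS : S.card = S'.card := by
    have h1 := Finset.card_filter_add_card_filter_not (s := S)
      (p := fun v : Fin n => v.val < L)
    have h2 := Finset.card_filter_add_card_filter_not (s := S')
      (p := fun v : Fin n => v.val < L)
    omega
  have hkc' : S'ᶜ.card = k := by
    rw [Finset.card_compl, ← hcardS, ← Finset.card_compl, hk]
  have hcl : (Sᶜ.filter fun v => v.val < L).card = (S'ᶜ.filter fun v => v.val < L).card := by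
    rw [compl_filter_card, compl_filter_card, ha]
  have hcr : (Sᶜ.filter fun v => ¬ v.val < L).card
      = (S'ᶜ.filter fun v => ¬ v.val < L).card := by
    rw [compl_filter_card, compl_filter_card, hb]
  set rL : ℝ := if n - L = 0 then 0
    else lam * ((S.filter fun v => ¬ v.val < L).card : ℝ) / ((n - L : ℕ) : ℝ) with hrLdef
  set rR : ℝ := if L = 0 then 0
    else lam * ((S.filter fun v => v.val < L).card : ℝ) / (L : ℝ) with hrRdef
  have hrL' : ∀ i : Fin n, i.val < L → ∀ T : Finset (Fin n),
      (T.filter fun v => ¬ v.val < L).card = (S.filter fun v => ¬ v.val < L).card →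
      rate lam (biGraph n L) T i = rL := by
    intro i hi T hT
    rw [rate_left lam n L hL T i hi, hT]
  have hrR' : ∀ i : Fin n, ¬ i.val < L → ∀ T : Finset (Fin n),
      (T.filter fun v => v.val < L).card = (S.filter fun v => v.val < L).card →
      rate lam (biGraph n L) T i = rR := by
    intro i hi T hT
    rw [rate_right lam n L hL T i hi, hT]
  -- rate sums are equal
  have hsum_rate : ∑ i ∈ Sᶜ, rate lam (biGraph n L) S i
      = ∑ i ∈ S'ᶜ, rate lam (biGraph n L) S' i := by
    rw [← Finset.sum_filter_add_sum_filter_not Sᶜ (fun v => v.val < L),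
        ← Finset.sum_filter_add_sum_filter_not S'ᶜ (fun v => v.val < L)]
    congr 1
    · rw [Finset.sum_congr rfl (fun i hi => hrL' i (Finset.mem_filter.mp hi).2 S rfl),
        Finset.sum_congr rfl (fun i hi => hrL' i (Finset.mem_filter.mp hi).2 S' hb.symm),
        Finset.sum_const, Finset.sum_const, hcl]
    · rw [Finset.sum_congr rfl (fun i hi => hrR' i (Finset.mem_filter.mp hi).2 S rfl),
        Finset.sum_congr rfl (fun i hi => hrR' i (Finset.mem_filter.mp hi).2 S' ha.symm),
        Finset.sum_const, Finset.sum_const, hcr]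
  -- numerator sums are equal
  have hnum : ∑ i ∈ Sᶜ, rate lam (biGraph n L) S i * vAge lam_e lam (biGraph n L) (insert i S)
      = ∑ i ∈ S'ᶜ, rate lam (biGraph n L) S' i * vAge lam_e lam (biGraph n L) (insert i S') := by
    rw [← Finset.sum_filter_add_sum_filter_not Sᶜ (fun v => v.val < L),
        ← Finset.sum_filter_add_sum_filter_not S'ᶜ (fun v => v.val < L)]
    congr 1
    · -- left part
      rcases Finset.eq_empty_or_nonempty (S'ᶜ.filter fun v => v.val < L) with h0 | ⟨i0, hi0⟩
      · have h0' : (Sᶜ.filter fun v => v.val < L) = ∅ := by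
          rw [← Finset.card_eq_zero, hcl, h0, Finset.card_empty]
        rw [h0, h0', Finset.sum_empty, Finset.sum_empty]
      · obtain ⟨hi0C, hi0p⟩ := Finset.mem_filter.mp hi0
        have hi0S : i0 ∉ S' := Finset.mem_compl.mp hi0C
        have hkpos : 0 < k := by
          rw [← hkc']; exact Finset.card_pos.mpr ⟨i0, hi0C⟩
        set V : ℝ := vAge lam_e lam (biGraph n L) (insert i0 S') with hV
        have hins : ∀ i ∈ (Sᶜ.filter fun v => v.val < L),
            vAge lam_e lam (biGraph n L) (insert i S) = V := by
          intro i hi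
          obtain ⟨hiC, hip⟩ := Finset.mem_filter.mp hi
          have hiS : i ∉ S := Finset.mem_compl.mp hiC
          apply IH ((insert i S)ᶜ.card) ?_ _ _ rfl ?_ ?_
          · rw [insert_compl_card S i hiC, hk]; omega
          · rw [filter_insert_card_pos _ _ _ hiS hip,
              filter_insert_card_pos _ _ _ hi0S hi0p, ha]
          · rw [filter_insert_card_neg _ _ _ (not_not_intro hip),
              filter_insert_card_neg _ _ _ (not_not_intro hi0p), hb]
        have hins' : ∀ i ∈ (S'ᶜ.filter fun v => v.val < L),
            vAge lam_e lam (biGraph n L) (insert i S') = V := by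
          intro i hi
          obtain ⟨hiC, hip⟩ := Finset.mem_filter.mp hi
          have hiS : i ∉ S' := Finset.mem_compl.mp hiC
          apply IH ((insert i S')ᶜ.card) ?_ _ _ rfl ?_ ?_
          · rw [insert_compl_card S' i hiC, hkc']; omega
          · rw [filter_insert_card_pos _ _ _ hiS hip,
              filter_insert_card_pos _ _ _ hi0S hi0p]
          · rw [filter_insert_card_neg _ _ _ (not_not_intro hip),
              filter_insert_card_neg _ _ _ (not_not_intro hi0p)]
        have e1 : ∑ i ∈ (Sᶜ.filter fun v => v.val < L),
            rate lam (biGraph n L) S i * vAge lam_e lam (biGraph n L) (insert i S)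
            = (Sᶜ.filter fun v => v.val < L).card • (rL * V) := by
          rw [← Finset.sum_const]
          refine Finset.sum_congr rfl fun i hi => ?_
          rw [hrL' i (Finset.mem_filter.mp hi).2 S rfl, hins i hi]
        have e2 : ∑ i ∈ (S'ᶜ.filter fun v => v.val < L),
            rate lam (biGraph n L) S' i * vAge lam_e lam (biGraph n L) (insert i S')
            = (S'ᶜ.filter fun v => v.val < L).card • (rL * V) := by
          rw [← Finset.sum_const]
          refine Finset.sum_congr rfl fun i hi => ?_
          rw [hrL' i (Finset.mem_filter.mp hi).2 S' hb.symm, hins' i hi]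
        rw [e1, e2, hcl]
    · -- right part
      rcases Finset.eq_empty_or_nonempty (S'ᶜ.filter fun v => ¬ v.val < L) with h0 | ⟨i0, hi0⟩
      · have h0' : (Sᶜ.filter fun v => ¬ v.val < L) = ∅ := by
          rw [← Finset.card_eq_zero, hcr, h0, Finset.card_empty]
        rw [h0, h0', Finset.sum_empty, Finset.sum_empty]
      · obtain ⟨hi0C, hi0p⟩ := Finset.mem_filter.mp hi0
        have hi0S : i0 ∉ S' := Finset.mem_compl.mp hi0C
        have hkpos : 0 < k := by
          rw [← hkc']; exact Finset.card_pos.mpr ⟨i0, hi0C⟩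
        set V : ℝ := vAge lam_e lam (biGraph n L) (insert i0 S') with hV
        have hins : ∀ i ∈ (Sᶜ.filter fun v => ¬ v.val < L),
            vAge lam_e lam (biGraph n L) (insert i S) = V := by
          intro i hi
          obtain ⟨hiC, hip⟩ := Finset.mem_filter.mp hi
          have hiS : i ∉ S := Finset.mem_compl.mp hiC
          apply IH ((insert i S)ᶜ.card) ?_ _ _ rfl ?_ ?_
          · rw [insert_compl_card S i hiC, hk]; omega
          · rw [filter_insert_card_neg _ _ _ hip,
              filter_insert_card_neg _ _ _ hi0p, ha]
          · rw [filter_insert_card_pos _ _ _ hiS hip,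
              filter_insert_card_pos _ _ _ hi0S hi0p, hb]
        have hins' : ∀ i ∈ (S'ᶜ.filter fun v => ¬ v.val < L),
            vAge lam_e lam (biGraph n L) (insert i S') = V := by
          intro i hi
          obtain ⟨hiC, hip⟩ := Finset.mem_filter.mp hi
          have hiS : i ∉ S' := Finset.mem_compl.mp hiC
          apply IH ((insert i S')ᶜ.card) ?_ _ _ rfl ?_ ?_
          · rw [insert_compl_card S' i hiC, hkc']; omega
          · rw [filter_insert_card_neg _ _ _ hip,
              filter_insert_card_neg _ _ _ hi0p]
          · rw [filter_insert_card_pos _ _ _ hiS hip,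
              filter_insert_card_pos _ _ _ hi0S hi0p]
        have e1 : ∑ i ∈ (Sᶜ.filter fun v => ¬ v.val < L),
            rate lam (biGraph n L) S i * vAge lam_e lam (biGraph n L) (insert i S)
            = (Sᶜ.filter fun v => ¬ v.val < L).card • (rR * V) := by
          rw [← Finset.sum_const]
          refine Finset.sum_congr rfl fun i hi => ?_
          rw [hrR' i (Finset.mem_filter.mp hi).2 S rfl, hins i hi]
        have e2 : ∑ i ∈ (S'ᶜ.filter fun v => ¬ v.val < L),
            rate lam (biGraph n L) S' i * vAge lam_e lam (biGraph n L) (insert i S')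
            = (S'ᶜ.filter fun v => ¬ v.val < L).card • (rR * V) := by
          rw [← Finset.sum_const]
          refine Finset.sum_congr rfl fun i hi => ?_
          rw [hrR' i (Finset.mem_filter.mp hi).2 S' ha.symm, hins' i hi]
        rw [e1, e2, hcr]
  rw [vAge,
    Finset.sum_attach Sᶜ (fun i => rate lam (biGraph n L) S i
      * vAge lam_e lam (biGraph n L) (insert i S)), hnum, hsum_rate, hcardS,
    ← Finset.sum_attach S'ᶜ (fun i => rate lam (biGraph n L) S' i
      * vAge lam_e lam (biGraph n L) (insert i S')), ← vAge]


/-- In `K_{L,R}` the version age of a nonempty set depends only on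
the number of its vertices in each part. -/
theorem stmt_4 (lam_e lam : ℝ) (hlam_e : 0 < lam_e) (hlam : 0 < lam)
    (n L : ℕ) (hL : L ≤ n)
    (S S' : Finset (Fin n)) (hS : S.Nonempty) (hS' : S'.Nonempty)
    (hleft : (S.filter fun v => v.val < L).card = (S'.filter fun v => v.val < L).card)
    (hright : (S.filter fun v => L ≤ v.val).card = (S'.filter fun v => L ≤ v.val).card) :
    vAge lam_e lam (biGraph n L) S = vAge lam_e lam (biGraph n L) S' := by
  have hright' : (S.filter fun v => ¬ v.val < L).card
      = (S'.filter fun v => ¬ v.val < L).card := by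
    simpa only [not_lt] using hright
  exact key lam_e lam n L hL Sᶜ.card S S' rfl hleft hright'
end
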